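/- arXiv:2107.06331 — 3 statements merged into one kernel-verified Lean document; each statement's English description precedes it below -/
import Mathlib

section
/- In any congestion game equipped with the marginal cost incentives τ_e(x) = (x−1)[ℓ_e(x) − ℓ_e(x−1)] for x ∈ {1,…,n} (with ℓ_e(0) = 0), for every assignment a, every user i, and every alternative action a'_i ∈ A_i, the change in user i's cost equals the change in social cost: C_i(a) − C_i(a'_i, a_{−i}) = SC(a) − SC(a'_i, a_{−i}). -/
open scoped BigOperators ENNReal

noncomputable section

/-- A congestion game with incentives: `n` users, `R` resources,
finite nonempty action sets `act i ⊆ 2^E`, resource cost functions `cost e`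
and incentive functions `tax e`. -/
structure CGame where
  n : ℕ
  R : ℕ
  act : Fin n → Finset (Finset (Fin R))
  act_ne : ∀ i, (act i).Nonempty
  cost : Fin R → ℕ → ℝ
  tax : Fin R → ℕ → ℝ

namespace CGame

variable (G : CGame)

/-- An assignment of actions (not necessarily feasible). -/
abbrev Assign := Fin G.n → Finset (Fin G.R)

/-- Feasibility of an assignment. -/
def IsAssign (a : G.Assign) : Prop := ∀ i, a i ∈ G.act i

/-- The load `|a|_e`: the number of users selecting resource `e`. -/
def load (a : G.Assign) (e : Fin G.R) : ℕ :=
  (Finset.univ.filter fun i => e ∈ a i).card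

/-- The social cost `SC(a)`. -/
def SC (a : G.Assign) : ℝ := ∑ i, ∑ e ∈ a i, G.cost e (G.load a e)

/-- The cost `C_i(a)` experienced by user `i` (resource costs plus incentives). -/
def userCost (i : Fin G.n) (a : G.Assign) : ℝ :=
  ∑ e ∈ a i, (G.cost e (G.load a e) + G.tax e (G.load a e))

/-- Pure Nash equilibrium. -/
def IsNE (a : G.Assign) : Prop :=
  G.IsAssign a ∧ ∀ i : Fin G.n, ∀ s ∈ G.act i,
    G.userCost i a ≤ G.userCost i (Function.update a i s)

/-- The Rosenthal potential of the game with incentives. -/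
def potential (a : G.Assign) : ℝ :=
  ∑ e, ∑ k ∈ Finset.Icc 1 (G.load a e), (G.cost e k + G.tax e k)

/-- The minimum achievable social cost. -/
def MinCost : ℝ := sInf {c | ∃ a, G.IsAssign a ∧ G.SC a = c}

end CGame

/-
Under marginal cost incentives a user pays exactly the externality it imposes: on each of its
resources `e` at load `x`, `ℓ_e(x) + τ_e(x) = x ℓ_e(x) - (x - 1) ℓ_e(x - 1)` is the increase of the
total cost on `e` caused by its presence. Summing over its resources, `C_i(a) = SC(a) - SC(a_{-i})`,
where `a_{-i}` lets user `i` choose no resource at all. Since `a_{-i}` does not depend on `a_i`,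
the differences of the two sides under a deviation of user `i` agree.
-/

namespace CGame

variable (G : CGame)

def IsMarginalCostTax : Prop :=
  ∀ e, ∀ x : ℕ, 1 ≤ x → x ≤ G.n → G.tax e x = ((x : ℝ) - 1) * (G.cost e x - G.cost e (x - 1))

def totalCost (e : Fin G.R) (x : ℕ) : ℝ := x * G.cost e x

lemma load_le (a : G.Assign) (e : Fin G.R) : G.load a e ≤ G.n :=
  (Finset.card_filter_le _ _).trans_eq (Finset.card_fin G.n)

lemma load_pos {a : G.Assign} {i : Fin G.n} {e : Fin G.R} (he : e ∈ a i) : 0 < G.load a e :=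
  Finset.card_pos.mpr ⟨i, Finset.mem_filter.mpr ⟨Finset.mem_univ i, he⟩⟩

lemma load_eq_load_update_empty_add (a : G.Assign) (i : Fin G.n) (e : Fin G.R) :
    G.load a e = G.load (Function.update a i ∅) e + if e ∈ a i then 1 else 0 := by
  have hfilter : Finset.univ.filter (fun j => e ∈ Function.update a i ∅ j)
      = (Finset.univ.filter fun j => e ∈ a j).erase i := by
    ext j
    by_cases hj : j = i
    · subst hj; simp
    · simp [hj]
  rw [load, load, hfilter]
  split_ifs with he
  · exact (Finset.card_erase_add_one (by simpa using he)).symm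
  · rw [Finset.erase_eq_of_notMem (by simpa using he), add_zero]

lemma SC_eq_sum_totalCost (a : G.Assign) : G.SC a = ∑ e, G.totalCost e (G.load a e) := by
  rw [SC, Finset.sum_comm' (t' := Finset.univ) (s' := fun e => Finset.univ.filter (e ∈ a ·))
    (by simp)]
  simp only [Finset.sum_const, nsmul_eq_mul, totalCost, load]

lemma SC_sub_SC_update_empty (a : G.Assign) (i : Fin G.n) :
    G.SC a - G.SC (Function.update a i ∅)
      = ∑ e ∈ a i, (G.totalCost e (G.load a e) - G.totalCost e (G.load a e - 1)) := by
  have hload := G.load_eq_load_update_empty_add a i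
  rw [SC_eq_sum_totalCost, SC_eq_sum_totalCost, ← Finset.sum_sub_distrib]
  calc _ = ∑ e ∈ a i, (G.totalCost e (G.load a e)
            - G.totalCost e (G.load (Function.update a i ∅) e)) :=
        (Finset.sum_subset (Finset.subset_univ _) fun e _ he => by
          rw [hload e, if_neg he, add_zero, sub_self]).symm
    _ = _ := Finset.sum_congr rfl fun e he => by rw [hload e, if_pos he, Nat.add_sub_cancel]

lemma IsMarginalCostTax.cost_add_tax {G : CGame} (htax : G.IsMarginalCostTax) (e : Fin G.R)
    {x : ℕ} (hx : 1 ≤ x) (hxn : x ≤ G.n) :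
    G.cost e x + G.tax e x = G.totalCost e x - G.totalCost e (x - 1) := by
  rw [htax e x hx hxn, totalCost, totalCost, Nat.cast_sub hx, Nat.cast_one]
  ring

lemma IsMarginalCostTax.userCost_eq_SC_sub_SC_update_empty {G : CGame} (htax : G.IsMarginalCostTax) (i : Fin G.n)
    (a : G.Assign) : G.userCost i a = G.SC a - G.SC (Function.update a i ∅) := by
  rw [SC_sub_SC_update_empty]
  exact Finset.sum_congr rfl fun e he => htax.cost_add_tax e (G.load_pos he) (G.load_le a e)

end CGame

theorem marginal_cost_incentives_exact_social_cost_general (G : CGame)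
    (htax : ∀ e, ∀ x : ℕ, 1 ≤ x → x ≤ G.n →
      G.tax e x = ((x : ℝ) - 1) * (G.cost e x - G.cost e (x - 1))) :
    ∀ a : G.Assign, G.IsAssign a → ∀ i : Fin G.n, ∀ s ∈ G.act i,
      G.userCost i a - G.userCost i (Function.update a i s)
        = G.SC a - G.SC (Function.update a i s) := by
  intro a _ i s _
  have hmc : G.IsMarginalCostTax := htax
  rw [hmc.userCost_eq_SC_sub_SC_update_empty, hmc.userCost_eq_SC_sub_SC_update_empty,
    Function.update_idem]
  ring

/-- In any congestion game equipped with the marginal cost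
incentives `τ_e(x) = (x−1)[ℓ_e(x) − ℓ_e(x−1)]` for `x ∈ {1,…,n}` (with
`ℓ_e(0) = 0`), for every assignment `a`, every user `i` and every alternative
action `a'_i ∈ A_i`, the change in user `i`'s cost equals the change in social
cost. -/
theorem marginal_cost_incentives_exact_social_cost (G : CGame)
    (hcost0 : ∀ e, G.cost e 0 = 0)
    (htax : ∀ e, ∀ x : ℕ, 1 ≤ x → x ≤ G.n →
      G.tax e x = ((x : ℝ) - 1) * (G.cost e x - G.cost e (x - 1))) :
    ∀ a : G.Assign, G.IsAssign a → ∀ i : Fin G.n, ∀ s ∈ G.act i,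
      G.userCost i a - G.userCost i (Function.update a i s)
        = G.SC a - G.SC (Function.update a i s) :=
  marginal_cost_incentives_exact_social_cost_general G htax
end
end

section
/- Let 𝒢 be a set of congestion games with incentives, each with at most n users and MinCost(G) > 0, and suppose there exist ζ > 0, λ > 0 and μ < 1 such that for every game G ∈ 𝒢 and every pair of assignments a, a' ∈ A: SC(a) + Σ_{i=1}^n [C_i(a'_i, a_{−i}) − C_i(a)] + ζ[Φ(a') − Φ(a)] ≤ λ SC(a') + μ SC(a). Then sup_{G∈𝒢} min_{a∈NE(G)} SC(a)/MinCost(G) ≤ λ/(1−μ). -/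
open scoped BigOperators ENNReal

noncomputable section

/-!
Rosenthal's potential `Φ` is an exact potential of the game with incentives: a unilateral
deviation changes `Φ` by exactly the deviator's change of cost. Hence a feasible minimiser `a`
of `Φ` is a pure Nash equilibrium, and for an optimal assignment `a*` both the deviation sum and
`Φ(a*) - Φ(a)` in the smoothness inequality at `(a, a*)` are nonnegative. What remains is
`SC(a) ≤ λ · MinCost + μ · SC(a)`, i.e. `SC(a) / MinCost ≤ λ / (1 - μ)`.
-/

open Finset

lemma Finset.sum_Icc_one_add_ite {M : Type*} [AddCommMonoid M] (f : ℕ → M) (m : ℕ) (p : Prop)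
    [Decidable p] :
    ∑ k ∈ Icc 1 (m + if p then 1 else 0), f k = ∑ k ∈ Icc 1 m, f k + if p then f (m + 1) else 0 := by
  split_ifs <;> simp [Finset.sum_Icc_succ_top]

namespace CGame

variable (G : CGame)

def loadExcept (a : G.Assign) (i : Fin G.n) (e : Fin G.R) : ℕ :=
  ((univ.erase i).filter fun j => e ∈ a j).card

lemma load_eq_loadExcept_add (a : G.Assign) (i : Fin G.n) (e : Fin G.R) :
    G.load a e = G.loadExcept a i e + if e ∈ a i then 1 else 0 := by
  rw [load, loadExcept, card_filter, card_filter, ← sum_erase_add _ _ (mem_univ i)]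

lemma loadExcept_update (a : G.Assign) (i : Fin G.n) (s : Finset (Fin G.R)) (e : Fin G.R) :
    G.loadExcept (Function.update a i s) i e = G.loadExcept a i e := by
  refine congrArg card (filter_congr fun j hj => ?_)
  rw [Function.update_of_ne (ne_of_mem_erase hj)]

lemma potential_eq_add_userCost (a : G.Assign) (i : Fin G.n) :
    G.potential a = ∑ e, ∑ k ∈ Icc 1 (G.loadExcept a i e), (G.cost e k + G.tax e k)
      + G.userCost i a := by
  have huser : G.userCost i a = ∑ e ∈ a i,
      (G.cost e (G.loadExcept a i e + 1) + G.tax e (G.loadExcept a i e + 1)) :=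
    sum_congr rfl fun e he => by rw [load_eq_loadExcept_add G a i e, if_pos he]
  rw [huser, potential]
  simp only [load_eq_loadExcept_add G a i, sum_Icc_one_add_ite, sum_add_distrib, sum_ite_mem,
    univ_inter]
  abel

lemma potential_update_sub (a : G.Assign) (i : Fin G.n) (s : Finset (Fin G.R)) :
    G.potential (Function.update a i s) - G.potential a
      = G.userCost i (Function.update a i s) - G.userCost i a := by
  rw [potential_eq_add_userCost G _ i, potential_eq_add_userCost G a i]
  simp only [loadExcept_update]
  ring

variable {G}

lemma IsAssign.update {a : G.Assign} (ha : G.IsAssign a) {i : Fin G.n} {s : Finset (Fin G.R)}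
    (hs : s ∈ G.act i) : G.IsAssign (Function.update a i s) := by
  intro j
  rcases eq_or_ne j i with rfl | hj
  · rwa [Function.update_self]
  · rw [Function.update_of_ne hj]
    exact ha j

lemma isNE_of_potential_le {a : G.Assign} (ha : G.IsAssign a)
    (hmin : ∀ b, G.IsAssign b → G.potential a ≤ G.potential b) : G.IsNE a := by
  refine ⟨ha, fun i s hs => ?_⟩
  have := G.potential_update_sub a i s
  linarith [hmin _ (ha.update hs)]

lemma IsNE.sum_userCost_update_sub_nonneg {a : G.Assign} (ha : G.IsNE a) {a' : G.Assign}
    (ha' : G.IsAssign a') :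
    0 ≤ ∑ i, (G.userCost i (Function.update a i (a' i)) - G.userCost i a) :=
  sum_nonneg fun i _ => sub_nonneg.mpr (ha.2 i (a' i) (ha' i))

variable (G)

lemma exists_isAssign : ∃ a, G.IsAssign a := by
  choose a ha using G.act_ne
  exact ⟨a, ha⟩

lemma exists_potential_minimizer :
    ∃ a, G.IsAssign a ∧ ∀ b, G.IsAssign b → G.potential a ≤ G.potential b :=
  Set.exists_min_image {b | G.IsAssign b} G.potential (Set.toFinite _) G.exists_isAssign

lemma exists_SC_eq_MinCost : ∃ a, G.IsAssign a ∧ G.SC a = G.MinCost := by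
  obtain ⟨a, ha⟩ := G.exists_isAssign
  have hne : {c | ∃ b, G.IsAssign b ∧ G.SC b = c}.Nonempty := ⟨_, a, ha, rfl⟩
  exact hne.csInf_mem ((Set.finite_range G.SC).subset fun _ ⟨b, _, hb⟩ => ⟨b, hb⟩)

end CGame

theorem smoothness_PoS_bound_general (n : ℕ) (𝒢 : Set CGame)
    (h𝒢 : ∀ G ∈ 𝒢, G.n ≤ n ∧ 0 < G.MinCost)
    (zeta lam mu : ℝ) (hzeta : 0 < zeta) (hmu : mu < 1)
    (hsmooth : ∀ G ∈ 𝒢, ∀ a a' : G.Assign, G.IsAssign a → G.IsAssign a' →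
      G.SC a + (∑ i, (G.userCost i (Function.update a i (a' i)) - G.userCost i a))
          + zeta * (G.potential a' - G.potential a)
        ≤ lam * G.SC a' + mu * G.SC a) :
    (⨆ G : CGame, ⨆ _ : G ∈ 𝒢,
        ⨅ a : {a : G.Assign // G.IsNE a}, ENNReal.ofReal (G.SC a.1 / G.MinCost))
      ≤ ENNReal.ofReal (lam / (1 - mu)) := by
  refine iSup₂_le fun G hG => ?_
  obtain ⟨a, ha, hmin⟩ := G.exists_potential_minimizer
  have hNE : G.IsNE a := CGame.isNE_of_potential_le ha hmin
  obtain ⟨opt, hopt, hSC⟩ := G.exists_SC_eq_MinCost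
  have hdev := hNE.sum_userCost_update_sub_nonneg hopt
  have hpot : 0 ≤ zeta * (G.potential opt - G.potential a) :=
    mul_nonneg hzeta.le (sub_nonneg.mpr (hmin opt hopt))
  have hbound : G.SC a * (1 - mu) ≤ lam * G.MinCost := by
    rw [← hSC]
    linarith [hsmooth G hG a opt ha hopt]
  refine iInf_le_of_le ⟨a, hNE⟩ (ENNReal.ofReal_le_ofReal ?_)
  rwa [div_le_div_iff₀ (h𝒢 G hG).2 (sub_pos.mpr hmu)]

/-- If a set `𝒢` of congestion games with incentives, each with
at most `n` users and positive minimum cost, satisfies the generalized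
smoothness condition with parameters `ζ > 0`, `λ > 0`, `μ < 1`, then the price
of stability of `𝒢` is at most `λ/(1−μ)`. -/
theorem smoothness_PoS_bound (n : ℕ) (𝒢 : Set CGame)
    (h𝒢 : ∀ G ∈ 𝒢, G.n ≤ n ∧ 0 < G.MinCost)
    (zeta lam mu : ℝ) (hzeta : 0 < zeta) (hlam : 0 < lam) (hmu : mu < 1)
    (hsmooth : ∀ G ∈ 𝒢, ∀ a a' : G.Assign, G.IsAssign a → G.IsAssign a' →
      G.SC a + (∑ i, (G.userCost i (Function.update a i (a' i)) - G.userCost i a))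
          + zeta * (G.potential a' - G.potential a)
        ≤ lam * G.SC a' + mu * G.SC a) :
    (⨆ G : CGame, ⨆ _ : G ∈ 𝒢,
        ⨅ a : {a : G.Assign // G.IsNE a}, ENNReal.ofReal (G.SC a.1 / G.MinCost))
      ≤ ENNReal.ofReal (lam / (1 - mu)) :=
  smoothness_PoS_bound_general n 𝒢 h𝒢 zeta lam mu hzeta hmu hsmooth
end
end

section
/- Let b : {0,…,n+1} → ℝ be a positive, convex, nondecreasing function on {1,…,n} with b(0) = 0, and consider the linear program: maximize ρ over F : {0,…,n+1} → ℝ with F(0) = F(n+1) = 0 and ρ ∈ ℝ, subject to b(y)·y − ρ·b(x)·x + F(x)·(x−z) − F(x+1)·(y−z) ≥ 0 for all (x,y,z) ∈ I(n). Every optimal solution (F, ρ*) has F nondecreasing on {1,…,n}, and if the optimal value satisfies ρ* < 1 then the optimal function is unique: any two optimal solutions (F, ρ*) and (F', ρ*) satisfy F(x) = F'(x) for all x ∈ {1,…,n}. -/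
open scoped BigOperators

noncomputable section

/-- Feasibility in the linear program: `(F, ρ)` is feasible for the basis
function `b` and `n` users if `F(0) = F(n+1) = 0` and
`b(y)·y − ρ·b(x)·x + F(x)·(x−z) − F(x+1)·(y−z) ≥ 0` for all triples
`(x, y, z) ∈ I(n)`, i.e. naturals with `z ≤ min{x,y}` and `1 ≤ x+y−z ≤ n`. -/
def FeasPoA (n : ℕ) (b : ℕ → ℝ) (F : ℕ → ℝ) (ρ : ℝ) : Prop :=
  F 0 = 0 ∧ F (n + 1) = 0 ∧
  ∀ x y z : ℕ, x ≤ n → y ≤ n → z ≤ x → z ≤ y → 1 ≤ x + y - z → x + y - z ≤ n →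
    b y * y - ρ * (b x * x) + F x * ((x : ℝ) - (z : ℝ))
      - F (x + 1) * ((y : ℝ) - (z : ℝ)) ≥ 0


/-!
Write `g x = x·b(x)` (`totalCost b x`). The constraints with `z < y` bound `F (x + 1)` from above by a nondecreasing
function of `F x`, and those with `z = y < x` bound `F x` from below, so every feasible `F` lies
between a lower envelope `lowerF` and the greedy upper envelope `upperF`; conversely `upperF` is
itself feasible as soon as `lowerF ≤ upperF` and `ρ ≤ 1`. Convexity of `b` gives `g` nondecreasing
increments, which makes `upperF` nondecreasing and, for `ρ < 1`, keeps `lowerF x < upperF x` for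
`x < n`. At an optimal `ρ < 1` the envelopes must therefore touch at `n`: otherwise, by continuity
in `ρ`, `upperF` would remain feasible for a slightly larger `ρ`. Since a gap `F x < upperF x`
propagates up to `n`, every optimal `F` equals `upperF` on `{1,…,n}`. For `ρ = 1` the constraints
`(x + 1, x, x)` and `(x, x + 1, x)` pin down `F (x + 1) = g (x + 1) - g x` directly.
-/

open Finset Filter Topology

section Increments

variable {f : ℕ → ℝ} {n : ℕ}

theorem sub_le_mul_increment (hf : MonotoneOn (fun k => f (k + 1) - f k) (Set.Iio n))
    {a c m : ℕ} (hac : a ≤ c) (hcm : c ≤ m + 1) (hm : m < n) :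
    f c - f a ≤ ((c : ℝ) - a) * (f (m + 1) - f m) := by
  induction c, hac using Nat.le_induction with
  | base => simp
  | succ c hac ih =>
    have hstep : f (c + 1) - f c ≤ f (m + 1) - f m :=
      hf (by simp only [Set.mem_Iio]; omega) (by simpa using hm) (by omega)
    push_cast
    linear_combination ih (by omega) + hstep

theorem mul_increment_le_sub (hf : MonotoneOn (fun k => f (k + 1) - f k) (Set.Iio n))
    {a c m : ℕ} (hma : m ≤ a) (hac : a ≤ c) (hc : c ≤ n) :
    ((c : ℝ) - a) * (f (m + 1) - f m) ≤ f c - f a := by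
  induction c, hac using Nat.le_induction with
  | base => simp
  | succ c hac ih =>
    have hstep : f (m + 1) - f m ≤ f (c + 1) - f c :=
      hf (by simp only [Set.mem_Iio]; omega) (by simp only [Set.mem_Iio]; omega) (by omega)
    push_cast
    linear_combination ih (by omega) + hstep

end Increments

structure IsConvexBasis (n : ℕ) (b : ℕ → ℝ) : Prop where
  zero : b 0 = 0
  pos : ∀ x : ℕ, 1 ≤ x → x ≤ n → 0 < b x
  convex : ∀ x : ℕ, 1 ≤ x → x + 1 ≤ n → b x - b (x - 1) ≤ b (x + 1) - b x

def totalCost (b : ℕ → ℝ) (x : ℕ) : ℝ := b x * x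

@[simp] theorem totalCost_zero (b : ℕ → ℝ) : totalCost b 0 = 0 := by simp [totalCost]

namespace IsConvexBasis

variable {n : ℕ} {b : ℕ → ℝ} (hb : IsConvexBasis n b)
include hb

theorem one_le_sub {x : ℕ} (hx : x < n) : b 1 ≤ b (x + 1) - b x := by
  induction x with
  | zero => simp [hb.zero]
  | succ k ih =>
    have := hb.convex (k + 1) (by omega) (by omega)
    simp only [Nat.add_sub_cancel] at this
    linarith [ih (by omega)]

theorem strictMonoOn : StrictMonoOn b (Set.Iic n) :=
  strictMonoOn_Iic_of_lt_succ fun x hx =>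
    sub_pos.1 ((hb.pos 1 le_rfl (by omega)).trans_le (hb.one_le_sub hx))

theorem nonneg {x : ℕ} (hx : x ≤ n) : 0 ≤ b x :=
  hb.zero ▸ hb.strictMonoOn.monotoneOn (by simp) (by simpa using hx) (Nat.zero_le x)

theorem totalCost_nonneg {x : ℕ} (hx : x ≤ n) : 0 ≤ totalCost b x :=
  mul_nonneg (hb.nonneg hx) x.cast_nonneg

theorem totalCost_pos {x : ℕ} (hx1 : 1 ≤ x) (hx : x ≤ n) : 0 < totalCost b x :=
  mul_pos (hb.pos x hx1 hx) (by exact_mod_cast hx1)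

theorem monotoneOn_totalCost_increment :
    MonotoneOn (fun k => totalCost b (k + 1) - totalCost b k) (Set.Iio n) := by
  refine monotoneOn_of_le_add_one Set.ordConnected_Iio fun m _ _ hm => ?_
  simp only [Set.mem_Iio] at hm
  have hconv := hb.convex (m + 1) (by omega) (by omega)
  have hmono := hb.strictMonoOn.monotoneOn (a := m + 1) (b := m + 2) (by simp; omega)
    (by simp; omega) (by omega)
  simp only [Nat.add_sub_cancel] at hconv
  simp only [totalCost]
  push_cast
  nlinarith [(m.cast_nonneg : (0 : ℝ) ≤ m)]

theorem totalCost_increment_nonneg {x : ℕ} (hx : x < n) :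
    0 ≤ totalCost b (x + 1) - totalCost b x := by
  have := hb.monotoneOn_totalCost_increment (by simpa using (Nat.zero_le x).trans_lt hx)
    (by simpa using hx) (Nat.zero_le x)
  simp only [zero_add, totalCost_zero, sub_zero] at this
  exact (hb.totalCost_nonneg (by omega)).trans this

end IsConvexBasis

section Envelopes

variable {n : ℕ} {b : ℕ → ℝ} {ρ : ℝ}

/-- The pairs `(y, z)` with `(x, y, z) ∈ I(n)` and `z < y`: the constraints that bound `F (x + 1)`
from above. -/
def upperPairs (n x : ℕ) : Finset (ℕ × ℕ) :=
  (range (n + 1) ×ˢ range (n + 1)).filter fun p => p.2 ≤ x ∧ p.2 < p.1 ∧ x + p.1 ≤ n + p.2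

/-- The bound on `F (x + 1)` imposed by the constraint `(x, p.1, p.2)` when `F x = u`. -/
def succBound (b : ℕ → ℝ) (ρ : ℝ) (x : ℕ) (u : ℝ) (p : ℕ × ℕ) : ℝ :=
  (totalCost b p.1 - ρ * totalCost b x + ((x : ℝ) - p.2) * u) / ((p.1 : ℝ) - p.2)

/-- The bound on `F x` imposed by the constraint `(x, y, y)`. -/
def lowerSlope (b : ℕ → ℝ) (ρ : ℝ) (x y : ℕ) : ℝ :=
  (ρ * totalCost b x - totalCost b y) / ((x : ℝ) - y)

/-- The greedy upper envelope: `F 0 = 0`, and each `F (x + 1)` as large as the constraints allow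
given `F x`. -/
def upperF (n : ℕ) (b : ℕ → ℝ) (ρ : ℝ) : ℕ → ℝ
  | 0 => 0
  | x + 1 =>
    if h : (upperPairs n x).Nonempty then (upperPairs n x).inf' h (succBound b ρ x (upperF n b ρ x))
    else 0

def lowerF (b : ℕ → ℝ) (ρ : ℝ) (x : ℕ) : ℝ :=
  if h : (range x).Nonempty then (range x).sup' h (lowerSlope b ρ x) else 0

theorem mem_upperPairs {x : ℕ} {p : ℕ × ℕ} :
    p ∈ upperPairs n x ↔ p.2 ≤ x ∧ p.2 < p.1 ∧ x + p.1 ≤ n + p.2 := by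
  simp only [upperPairs, mem_filter, mem_product, mem_range]
  omega

theorem mk_self_mem_upperPairs {x y : ℕ} (hxy : x < y) (hy : y ≤ n) : (y, x) ∈ upperPairs n x :=
  mem_upperPairs.2 (by omega)

theorem upperPairs_nonempty {x : ℕ} (hx : x < n) : (upperPairs n x).Nonempty :=
  ⟨_, mk_self_mem_upperPairs x.lt_succ_self hx⟩

theorem upperPairs_self : upperPairs n n = ∅ :=
  eq_empty_of_forall_notMem fun _ hp => by rw [mem_upperPairs] at hp; omega

theorem upperF_succ_self : upperF n b ρ (n + 1) = 0 := by
  simp [upperF, upperPairs_self]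

theorem succBound_self (y x : ℕ) (u : ℝ) :
    succBound b ρ x u (y, x) = (totalCost b y - ρ * totalCost b x) / ((y : ℝ) - x) := by
  simp [succBound]

theorem succBound_mono {x : ℕ} {p : ℕ × ℕ} (hp : p ∈ upperPairs n x) {u v : ℝ} (huv : u ≤ v) :
    succBound b ρ x u p ≤ succBound b ρ x v p := by
  rw [mem_upperPairs] at hp
  have hzy : (p.2 : ℝ) < p.1 := by exact_mod_cast hp.2.1
  have hzx : (p.2 : ℝ) ≤ x := by exact_mod_cast hp.1
  unfold succBound
  gcongr

theorem succBound_strictMono {x : ℕ} {p : ℕ × ℕ} (hp : p ∈ upperPairs n x) (hzx : p.2 < x)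
    {u v : ℝ} (huv : u < v) : succBound b ρ x u p < succBound b ρ x v p := by
  rw [mem_upperPairs] at hp
  have hzy : (p.2 : ℝ) < p.1 := by exact_mod_cast hp.2.1
  have hzx : (p.2 : ℝ) < x := by exact_mod_cast hzx
  unfold succBound
  gcongr

theorem upperF_succ_le {x : ℕ} {p : ℕ × ℕ} (hp : p ∈ upperPairs n x) :
    upperF n b ρ (x + 1) ≤ succBound b ρ x (upperF n b ρ x) p := by
  rw [upperF, dif_pos ⟨p, hp⟩]
  exact inf'_le _ hp

theorem le_upperF_succ {x : ℕ} (hx : x < n) {c : ℝ}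
    (h : ∀ p ∈ upperPairs n x, c ≤ succBound b ρ x (upperF n b ρ x) p) :
    c ≤ upperF n b ρ (x + 1) := by
  rw [upperF, dif_pos (upperPairs_nonempty hx)]
  exact le_inf' _ _ h

theorem exists_upperF_succ_eq {x : ℕ} (hx : x < n) :
    ∃ p ∈ upperPairs n x, upperF n b ρ (x + 1) = succBound b ρ x (upperF n b ρ x) p := by
  rw [upperF, dif_pos (upperPairs_nonempty hx)]
  exact exists_mem_eq_inf' _ _

theorem lowerSlope_le_lowerF {x y : ℕ} (hy : y < x) : lowerSlope b ρ x y ≤ lowerF b ρ x := by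
  rw [lowerF, dif_pos ⟨y, mem_range.2 hy⟩]
  exact le_sup' (lowerSlope b ρ x) (mem_range.2 hy)

theorem lowerF_le {x : ℕ} (hx : 0 < x) {c : ℝ} (h : ∀ y < x, lowerSlope b ρ x y ≤ c) :
    lowerF b ρ x ≤ c := by
  rw [lowerF, dif_pos (nonempty_range_iff.2 hx.ne')]
  exact sup'_le _ _ fun y hy => h y (mem_range.1 hy)

theorem exists_lowerF_eq {x : ℕ} (hx : 0 < x) : ∃ y < x, lowerF b ρ x = lowerSlope b ρ x y := by
  rw [lowerF, dif_pos (nonempty_range_iff.2 hx.ne')]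
  obtain ⟨y, hy, h⟩ := exists_mem_eq_sup' (nonempty_range_iff.2 hx.ne') (lowerSlope b ρ x)
  exact ⟨y, mem_range.1 hy, h⟩

theorem continuous_upperF (n : ℕ) (b : ℕ → ℝ) (x : ℕ) : Continuous fun ρ => upperF n b ρ x := by
  induction x with
  | zero => exact continuous_const
  | succ x ih =>
    by_cases h : (upperPairs n x).Nonempty
    · simp only [upperF, dif_pos h]
      refine Continuous.finset_inf'_apply h fun p _ => ?_
      unfold succBound
      fun_prop
    · simp only [upperF, dif_neg h]
      exact continuous_const

theorem continuous_lowerF (b : ℕ → ℝ) (x : ℕ) : Continuous fun ρ => lowerF b ρ x := by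
  by_cases h : (range x).Nonempty
  · simp only [lowerF, dif_pos h]
    refine Continuous.finset_sup'_apply h fun y _ => ?_
    unfold lowerSlope
    fun_prop
  · simp only [lowerF, dif_neg h]
    exact continuous_const

end Envelopes

section Feasibility

variable {n : ℕ} {b F : ℕ → ℝ} {ρ : ℝ}

theorem constraint_iff_le_succBound {x y z : ℕ} (hzy : z < y) :
    b y * y - ρ * (b x * x) + F x * ((x : ℝ) - z) - F (x + 1) * ((y : ℝ) - z) ≥ 0 ↔
      F (x + 1) ≤ succBound b ρ x (F x) (y, z) := by
  have hd : (0 : ℝ) < y - z := sub_pos.2 (by exact_mod_cast hzy)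
  rw [succBound, le_div_iff₀ hd, totalCost, totalCost]
  constructor <;> intro h <;> linarith

theorem constraint_iff_lowerSlope_le {x y : ℕ} (hyx : y < x) :
    b y * y - ρ * (b x * x) + F x * ((x : ℝ) - y) - F (x + 1) * ((y : ℝ) - y) ≥ 0 ↔
      lowerSlope b ρ x y ≤ F x := by
  have hd : (0 : ℝ) < x - y := sub_pos.2 (by exact_mod_cast hyx)
  rw [lowerSlope, div_le_iff₀ hd, totalCost, totalCost]
  constructor <;> intro h <;> linarith

theorem feasPoA_upperF (hb : IsConvexBasis n b) (hρ : ρ ≤ 1)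
    (hLM : ∀ x, 0 < x → x ≤ n → lowerF b ρ x ≤ upperF n b ρ x) :
    FeasPoA n b (upperF n b ρ) ρ := by
  refine ⟨rfl, upperF_succ_self, fun x y z hx hy hzx hzy h1 h2 => ?_⟩
  rcases hzy.lt_or_eq with hzy | rfl
  · exact (constraint_iff_le_succBound hzy).2 (upperF_succ_le (mem_upperPairs.2 (by omega)))
  rcases hzx.lt_or_eq with hzx | rfl
  · exact (constraint_iff_lowerSlope_le hzx).2
      ((lowerSlope_le_lowerF hzx).trans (hLM x (by omega) hx))
  have := hb.totalCost_nonneg hx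
  simp only [totalCost, sub_self, mul_zero, add_zero, sub_zero] at this ⊢
  nlinarith

namespace FeasPoA

variable (hF : FeasPoA n b F ρ)
include hF

theorem succ_le_succBound {x : ℕ} {p : ℕ × ℕ} (hp : p ∈ upperPairs n x) :
    F (x + 1) ≤ succBound b ρ x (F x) p := by
  obtain ⟨y, z⟩ := p
  rw [mem_upperPairs] at hp
  exact (constraint_iff_le_succBound hp.2.1).1 (hF.2.2 x y z (by omega) (by omega) hp.1 hp.2.1.le
    (by omega) (by omega))

theorem lowerSlope_le {x y : ℕ} (hx : x ≤ n) (hyx : y < x) : lowerSlope b ρ x y ≤ F x :=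
  (constraint_iff_lowerSlope_le hyx).1 (hF.2.2 x y y hx (by omega) hyx.le le_rfl (by omega)
    (by omega))

theorem lowerF_le {x : ℕ} (hx0 : 0 < x) (hx : x ≤ n) : lowerF b ρ x ≤ F x :=
  _root_.lowerF_le hx0 fun _ hy => hF.lowerSlope_le hx hy

theorem le_upperF {x : ℕ} (hx : x ≤ n) : F x ≤ upperF n b ρ x := by
  induction x with
  | zero => exact hF.1.le
  | succ x ih =>
    exact le_upperF_succ hx fun p hp =>
      (hF.succ_le_succBound hp).trans (succBound_mono hp (ih (by omega)))

theorem lowerF_le_upperF {x : ℕ} (hx0 : 0 < x) (hx : x ≤ n) : lowerF b ρ x ≤ upperF n b ρ x :=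
  (hF.lowerF_le hx0 hx).trans (hF.le_upperF hx)

theorem le_one (hb : IsConvexBasis n b) (hn : 0 < n) : ρ ≤ 1 := by
  have h := hF.2.2 1 1 1 hn hn le_rfl le_rfl le_rfl (by omega)
  have hb1 := hb.pos 1 le_rfl hn
  simp only [Nat.cast_one, mul_one, sub_self, mul_zero, add_zero, sub_zero] at h
  nlinarith

end FeasPoA

end Feasibility

section UpperEnvelope

variable {n : ℕ} {b : ℕ → ℝ} {ρ : ℝ}

theorem upperF_mul_sub_le_of_lt (hb : IsConvexBasis n b) (hρ : ρ ≤ 1) {x y : ℕ} (hxy : x < y)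
    (hy : y ≤ n) : upperF n b ρ x * ((y : ℝ) - x) ≤ totalCost b y - ρ * totalCost b x := by
  cases x with
  | zero => simpa [upperF] using hb.totalCost_nonneg hy
  | succ k =>
    have hd : (0 : ℝ) < y - k := sub_pos.2 (by exact_mod_cast (by omega : k < y))
    have hd1 : (0 : ℝ) < y - (k + 1) := sub_pos.2 (by exact_mod_cast hxy)
    have hpure : upperF n b ρ (k + 1) * ((y : ℝ) - k) ≤ totalCost b y - ρ * totalCost b k := by
      have := upperF_succ_le (b := b) (ρ := ρ) (mk_self_mem_upperPairs (by omega : k < y) hy)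
      rwa [succBound_self, le_div_iff₀ hd] at this
    have hchord : ((y : ℝ) - (k + 1 : ℕ)) * (totalCost b (k + 1) - totalCost b k) ≤
        totalCost b y - totalCost b (k + 1) :=
      mul_increment_le_sub hb.monotoneOn_totalCost_increment k.le_succ hxy.le hy
    have hΔ := hb.totalCost_increment_nonneg (x := k) (by omega)
    have hX : 0 ≤ totalCost b (k + 1) +
        ((y : ℝ) - (k + 1)) * (totalCost b (k + 1) - totalCost b k) :=
      add_nonneg (hb.totalCost_nonneg (by omega)) (mul_nonneg hd1.le hΔ)
    push_cast at hchord ⊢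
    refine le_of_mul_le_mul_right ?_ hd
    nlinarith [mul_le_mul_of_nonneg_right hpure hd1.le, mul_le_mul_of_nonneg_right hρ hX]

theorem upperF_mul_sub_le (hb : IsConvexBasis n b) (hρ : ρ ≤ 1)
    (hLM : ∀ x, 0 < x → x ≤ n → lowerF b ρ x ≤ upperF n b ρ x) {x y : ℕ} (hx : x ≤ n)
    (hy : y ≤ n) : upperF n b ρ x * ((y : ℝ) - x) ≤ totalCost b y - ρ * totalCost b x := by
  rcases lt_trichotomy y x with hyx | rfl | hxy
  · have hd : (0 : ℝ) < x - y := sub_pos.2 (by exact_mod_cast hyx)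
    have := (lowerSlope_le_lowerF hyx).trans (hLM x (by omega) hx)
    rw [lowerSlope, div_le_iff₀ hd] at this
    linarith
  · nlinarith [hb.totalCost_nonneg hy]
  · exact upperF_mul_sub_le_of_lt hb hρ hxy hy

theorem monotoneOn_upperF (hb : IsConvexBasis n b) (hρ : ρ ≤ 1)
    (hLM : ∀ x, 0 < x → x ≤ n → lowerF b ρ x ≤ upperF n b ρ x) :
    MonotoneOn (upperF n b ρ) (Set.Iic n) := by
  refine monotoneOn_of_le_add_one Set.ordConnected_Iic fun x _ _ hx => ?_
  simp only [Set.mem_Iic] at hx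
  refine le_upperF_succ hx fun p hp => ?_
  obtain ⟨y, z⟩ := p
  rw [mem_upperPairs] at hp
  have hd : (0 : ℝ) < y - z := sub_pos.2 (by exact_mod_cast hp.2.1)
  rw [succBound, le_div_iff₀ hd]
  linarith [upperF_mul_sub_le hb hρ hLM (x := x) (y := y) (by omega) (by omega)]

theorem b_one_le_upperF (hb : IsConvexBasis n b) (hρ : ρ ≤ 1)
    (hLM : ∀ x, 0 < x → x ≤ n → lowerF b ρ x ≤ upperF n b ρ x) {x : ℕ} (hx0 : 0 < x)
    (hx : x ≤ n) : b 1 ≤ upperF n b ρ x := by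
  have hone : b 1 ≤ upperF n b ρ 1 := by
    refine le_upperF_succ (by omega) fun p hp => ?_
    obtain ⟨y, z⟩ := p
    rw [mem_upperPairs] at hp
    obtain rfl : z = 0 := by omega
    have hy : (0 : ℝ) < y := by exact_mod_cast hp.2.1
    rw [succBound, totalCost]
    simp only [totalCost_zero, mul_zero, CharP.cast_eq_zero, sub_zero, zero_mul, add_zero]
    rw [mul_div_cancel_right₀ _ hy.ne']
    exact hb.strictMonoOn.monotoneOn (by simp; omega) (by simp; omega) (by omega)
  exact hone.trans (monotoneOn_upperF hb hρ hLM (by simp; omega) (by simpa using hx) hx0)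

end UpperEnvelope

section Pinch

variable {n : ℕ} {b : ℕ → ℝ} {ρ : ℝ}

theorem lowerF_lt_lowerF_succ (hb : IsConvexBasis n b) (hρ0 : 0 < ρ) (hρ1 : ρ < 1) {x : ℕ}
    (hx0 : 0 < x) (hx : x < n) : lowerF b ρ x < lowerF b ρ (x + 1) := by
  obtain ⟨w, hw, hL⟩ := exists_lowerF_eq (b := b) (ρ := ρ) hx0
  have hd : (0 : ℝ) < x - w := sub_pos.2 (by exact_mod_cast hw)
  have hd1 : (0 : ℝ) < (x + 1 : ℕ) - w := sub_pos.2 (by exact_mod_cast (by omega : w < x + 1))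
  have key : ρ * totalCost b x - totalCost b w <
      ρ * (((x : ℝ) - w) * (totalCost b (x + 1) - totalCost b x)) := by
    rcases Nat.eq_zero_or_pos w with rfl | hw0
    · have hbx : b x < b (x + 1) :=
        hb.strictMonoOn (by simp; omega) (by simpa using hx) x.lt_succ_self
      have hx0' : (0 : ℝ) < x := by exact_mod_cast hx0
      simp only [totalCost, CharP.cast_eq_zero, sub_zero, Nat.cast_add, Nat.cast_one]
      nlinarith [mul_pos hρ0 (mul_pos (mul_pos hx0' (by linarith : (0 : ℝ) < x + 1))
        (sub_pos.2 hbx))]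
    · have hchord : totalCost b x - totalCost b w ≤
          ((x : ℝ) - w) * (totalCost b (x + 1) - totalCost b x) :=
        sub_le_mul_increment hb.monotoneOn_totalCost_increment hw.le x.le_succ hx
      nlinarith [mul_pos (sub_pos.2 hρ1) (hb.totalCost_pos hw0 (by omega)),
        mul_le_mul_of_nonneg_left hchord hρ0.le]
  rw [hL]
  refine lt_of_lt_of_le ?_ (lowerSlope_le_lowerF (by omega : w < x + 1))
  rw [lowerSlope, lowerSlope, div_lt_div_iff₀ hd hd1]
  push_cast at hd1 ⊢
  nlinarith

theorem upperF_succ_le_lowerF (hb : IsConvexBasis n b) (hρ : ρ ≤ 1)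
    (hLM : ∀ x, 0 < x → x ≤ n → lowerF b ρ x ≤ upperF n b ρ x) {x : ℕ} (hx0 : 0 < x) (hx : x < n)
    (h : upperF n b ρ x ≤ lowerF b ρ x) : upperF n b ρ (x + 1) ≤ lowerF b ρ x := by
  obtain ⟨w, hw, hL⟩ := exists_lowerF_eq (b := b) (ρ := ρ) hx0
  have hd : (0 : ℝ) < x - w := sub_pos.2 (by exact_mod_cast hw)
  have hLx : lowerF b ρ x * ((x : ℝ) - w) = ρ * totalCost b x - totalCost b w := by
    rw [hL, lowerSlope, div_mul_cancel₀ _ hd.ne']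
  rcases Nat.eq_zero_or_pos w with rfl | hw0
  · have hp : ((1, 0) : ℕ × ℕ) ∈ upperPairs n x := mem_upperPairs.2 (by omega)
    calc upperF n b ρ (x + 1) ≤ succBound b ρ x (upperF n b ρ x) (1, 0) := upperF_succ_le hp
      _ ≤ succBound b ρ x (lowerF b ρ x) (1, 0) := succBound_mono hp h
      _ = b 1 := by
        simp only [succBound, totalCost, Nat.cast_one, Nat.cast_zero, sub_zero, div_one,
          mul_one] at hLx ⊢
        linarith
      _ ≤ upperF n b ρ x := b_one_le_upperF hb hρ hLM hx0 hx.le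
      _ ≤ lowerF b ρ x := h
  · -- as `w` attains `lowerF x`, the constraint `(x, w, w - 1)` maps `lowerF x` to itself
    have hp : (w, w - 1) ∈ upperPairs n x := mem_upperPairs.2 (by omega)
    calc upperF n b ρ (x + 1) ≤ succBound b ρ x (upperF n b ρ x) (w, w - 1) := upperF_succ_le hp
      _ ≤ succBound b ρ x (lowerF b ρ x) (w, w - 1) := succBound_mono hp h
      _ = lowerF b ρ x := by
        rw [succBound, Nat.cast_pred hw0, sub_sub_cancel, div_one]
        linarith

theorem lowerF_lt_upperF (hb : IsConvexBasis n b) (hρ : ρ < 1)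
    (hLM : ∀ x, 0 < x → x ≤ n → lowerF b ρ x ≤ upperF n b ρ x) {x : ℕ} (hx0 : 0 < x) (hx : x < n) :
    lowerF b ρ x < upperF n b ρ x := by
  by_contra! h
  rcases le_or_gt ρ 0 with hρ0 | hρ0
  · have hL : lowerF b ρ x ≤ 0 := lowerF_le hx0 fun y hy => by
      have hd : (0 : ℝ) ≤ x - y := sub_nonneg.2 (by exact_mod_cast hy.le)
      refine div_nonpos_of_nonpos_of_nonneg ?_ hd
      nlinarith [hb.totalCost_nonneg hx.le, hb.totalCost_nonneg (hy.le.trans hx.le)]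
    linarith [b_one_le_upperF hb hρ.le hLM hx0 hx.le, hb.pos 1 le_rfl (by omega)]
  · linarith [lowerF_lt_lowerF_succ hb hρ0 hρ hx0 hx, hLM (x + 1) x.succ_pos hx,
      upperF_succ_le_lowerF hb hρ.le hLM hx0 hx h]

theorem lowerF_succ_lt (hb : IsConvexBasis n b) (hρ : ρ < 1) {x : ℕ} (hx : x < n) :
    lowerF b ρ (x + 1) < totalCost b (x + 1) - ρ * totalCost b x := by
  obtain ⟨w, hw, hL⟩ := exists_lowerF_eq (b := b) (ρ := ρ) x.succ_pos
  have hd : (0 : ℝ) < (x + 1 : ℕ) - w := sub_pos.2 (by exact_mod_cast hw)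
  have hchord : totalCost b x - totalCost b w ≤
      ((x : ℝ) - w) * (totalCost b (x + 1) - totalCost b x) :=
    sub_le_mul_increment hb.monotoneOn_totalCost_increment (by omega) x.le_succ hx
  have hpos : 0 < totalCost b (x + 1) + ((x + 1 : ℕ) - (w : ℝ)) * totalCost b x :=
    add_pos_of_pos_of_nonneg (hb.totalCost_pos x.succ_pos hx)
      (mul_nonneg hd.le (hb.totalCost_nonneg hx.le))
  rw [hL, lowerSlope, div_lt_iff₀ hd]
  push_cast at hd hpos ⊢
  nlinarith [mul_pos (sub_pos.2 hρ) hpos]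

theorem le_upperF_last {m : ℕ} (hb : IsConvexBasis (m + 1) b)
    (h : totalCost b (m + 1) - totalCost b m ≤ upperF (m + 1) b ρ m) :
    totalCost b (m + 1) - ρ * totalCost b m ≤ upperF (m + 1) b ρ (m + 1) := by
  refine le_upperF_succ m.lt_succ_self fun p hp => ?_
  obtain ⟨y, z⟩ := p
  rw [mem_upperPairs] at hp
  obtain rfl : y = z + 1 := by omega
  have hchord : totalCost b (m + 1) - totalCost b (z + 1) ≤
      ((m + 1 : ℕ) - ((z + 1 : ℕ) : ℝ)) * (totalCost b (m + 1) - totalCost b m) :=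
    sub_le_mul_increment hb.monotoneOn_totalCost_increment (by omega) le_rfl m.lt_succ_self
  have hmz : (0 : ℝ) ≤ m - z := sub_nonneg.2 (by exact_mod_cast hp.1)
  rw [succBound]
  push_cast at hchord ⊢
  rw [add_sub_cancel_left, div_one]
  nlinarith [mul_le_mul_of_nonneg_left h hmz]

theorem upperF_pred_le (hb : IsConvexBasis n b) (hρ : ρ < 1) (hn : 0 < n)
    (h : upperF n b ρ n = lowerF b ρ n) :
    upperF n b ρ (n - 1) ≤ totalCost b n - totalCost b (n - 1) := by
  obtain ⟨m, rfl⟩ : ∃ m, n = m + 1 := ⟨n - 1, by omega⟩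
  rw [Nat.add_sub_cancel]
  by_contra! hlt
  have := le_upperF_last hb hlt.le
  rw [h] at this
  linarith [lowerF_succ_lt hb hρ m.lt_succ_self]

end Pinch

namespace FeasPoA

variable {n : ℕ} {b F : ℕ → ℝ} {ρ : ℝ}

theorem lt_upperF_succ (hF : FeasPoA n b F ρ) (hb : IsConvexBasis n b) (hρ : ρ ≤ 1)
    (htop : upperF n b ρ (n - 1) ≤ totalCost b n - totalCost b (n - 1)) {x : ℕ} (hx0 : 0 < x)
    (hx : x < n) (hFx : F x < upperF n b ρ x) : F (x + 1) < upperF n b ρ (x + 1) := by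
  suffices ∃ q ∈ upperPairs n x, q.2 < x ∧
      succBound b ρ x (upperF n b ρ x) q ≤ upperF n b ρ (x + 1) by
    obtain ⟨q, hq, hqx, hqM⟩ := this
    exact (hF.succ_le_succBound hq).trans_lt ((succBound_strictMono hq hqx hFx).trans_le hqM)
  obtain ⟨⟨y, z⟩, hp, hM⟩ := exists_upperF_succ_eq (b := b) (ρ := ρ) hx
  have hp' : z ≤ x ∧ z < y ∧ x + y ≤ n + z := mem_upperPairs.1 hp
  rcases hp'.1.lt_or_eq with hzx | hzx
  · exact ⟨(y, z), hp, hzx, hM.ge⟩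
  subst z
  -- the minimum is attained at a constraint not involving `F x`; trade it for one that does
  have hd : (0 : ℝ) < y - x := sub_pos.2 (by exact_mod_cast hp'.2.1)
  rw [hM, succBound_self]
  rcases (show y ≤ n by omega).lt_or_eq with hyn | rfl
  · refine ⟨(y, x - 1), mem_upperPairs.2 (by omega), by omega, ?_⟩
    have hd1 : (0 : ℝ) < y - (x - 1) := by linarith
    rw [succBound, Nat.cast_pred hx0, div_le_div_iff₀ hd1 hd]
    nlinarith [upperF_mul_sub_le_of_lt hb hρ hp'.2.1 hyn.le]
  · refine ⟨(y - 1, x - 1), mem_upperPairs.2 (by omega), by omega, ?_⟩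
    have hmono : upperF y b ρ x ≤ upperF y b ρ (y - 1) :=
      monotoneOn_upperF hb hρ (fun _ => hF.lowerF_le_upperF) (by simp; omega) (by simp)
        (by omega)
    rw [succBound, Nat.cast_pred hx0, Nat.cast_pred (by omega), sub_sub_sub_cancel_right,
      div_le_div_iff_of_pos_right hd]
    linarith

theorem eq_upperF_of_lt_one (hF : FeasPoA n b F ρ) (hb : IsConvexBasis n b) (hρ : ρ < 1)
    (h : upperF n b ρ n = lowerF b ρ n) {x : ℕ} (hx0 : 0 < x) (hx : x ≤ n) :
    F x = upperF n b ρ x := by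
  refine (hF.le_upperF hx).antisymm (not_lt.1 fun hlt => ?_)
  have htop := upperF_pred_le hb hρ (by omega) h
  have hprop : ∀ k, x ≤ k → k ≤ n → F k < upperF n b ρ k := by
    intro k hk
    induction k, hk using Nat.le_induction with
    | base => exact fun _ => hlt
    | succ k hxk ih =>
      exact fun hk => hF.lt_upperF_succ hb hρ.le htop (by omega) (by omega) (ih (by omega))
  linarith [hprop n hx le_rfl, hF.lowerF_le (by omega) le_rfl]

theorem upperF_eq_lowerF (hF : FeasPoA n b F ρ) (hb : IsConvexBasis n b) (hρ : ρ < 1)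
    (hopt : ∀ F' : ℕ → ℝ, ∀ ρ' : ℝ, FeasPoA n b F' ρ' → ρ' ≤ ρ) :
    upperF n b ρ n = lowerF b ρ n := by
  by_contra hne
  have hLM : ∀ x, 0 < x → x ≤ n → lowerF b ρ x ≤ upperF n b ρ x := fun _ => hF.lowerF_le_upperF
  have hlt : ∀ x ∈ Icc 1 n, lowerF b ρ x < upperF n b ρ x := by
    intro x hx
    rw [mem_Icc] at hx
    rcases hx.2.lt_or_eq with hxn | rfl
    · exact lowerF_lt_upperF hb hρ hLM hx.1 hxn
    · exact (hLM x hx.1 le_rfl).lt_of_ne' hne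
  -- strict inequalities persist for slightly larger `ρ`, where `upperF` would still be feasible
  have hev : ∀ᶠ ρ' in 𝓝 ρ, ρ' < 1 ∧ ∀ x ∈ Icc 1 n, lowerF b ρ' x < upperF n b ρ' x :=
    (eventually_lt_nhds hρ).and <| (eventually_all_finset _).2 fun x hx =>
      (continuous_lowerF b x).continuousAt.eventually_lt (continuous_upperF n b x).continuousAt
        (hlt x hx)
  obtain ⟨ρ', hρρ', hρ'1, hρ'⟩ := hev.exists_gt
  have := hopt _ _ (feasPoA_upperF hb hρ'1.le fun x hx0 hx => (hρ' x (mem_Icc.2 ⟨hx0, hx⟩)).le)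
  linarith

theorem eq_upperF_of_one (hF : FeasPoA n b F 1) {x : ℕ} (hx : x < n) :
    F (x + 1) = upperF n b 1 (x + 1) := by
  have hup := upperF_succ_le (b := b) (ρ := 1) (mk_self_mem_upperPairs x.lt_succ_self hx)
  have hlow := hF.lowerSlope_le hx x.lt_succ_self
  rw [succBound_self] at hup
  rw [lowerSlope] at hlow
  simp only [one_mul] at hup hlow
  exact (hF.le_upperF hx).antisymm (hup.trans hlow)

theorem eq_upperF (hF : FeasPoA n b F ρ) (hb : IsConvexBasis n b)
    (hopt : ∀ F' : ℕ → ℝ, ∀ ρ' : ℝ, FeasPoA n b F' ρ' → ρ' ≤ ρ) {x : ℕ} (hx0 : 0 < x)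
    (hx : x ≤ n) : F x = upperF n b ρ x := by
  rcases (hF.le_one hb (by omega)).lt_or_eq with hρ | rfl
  · exact hF.eq_upperF_of_lt_one hb hρ (hF.upperF_eq_lowerF hb hρ hopt) hx0 hx
  · obtain ⟨k, rfl⟩ : ∃ k, x = k + 1 := ⟨x - 1, by omega⟩
    exact hF.eq_upperF_of_one (by omega)

end FeasPoA

theorem optimal_F_nondecreasing_and_unique_general
    (n : ℕ) (b : ℕ → ℝ)
    (hb0 : b 0 = 0)
    (hbpos : ∀ x : ℕ, 1 ≤ x → x ≤ n → 0 < b x)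
    (hbconv : ∀ x : ℕ, 1 ≤ x → x + 1 ≤ n → b x - b (x - 1) ≤ b (x + 1) - b x)
    (F : ℕ → ℝ) (ρstar : ℝ)
    (hfeas : FeasPoA n b F ρstar)
    (hopt : ∀ F' : ℕ → ℝ, ∀ ρ' : ℝ, FeasPoA n b F' ρ' → ρ' ≤ ρstar) :
    (∀ x : ℕ, 1 ≤ x → x < n → F x ≤ F (x + 1)) ∧
    (ρstar < 1 → ∀ F' : ℕ → ℝ, FeasPoA n b F' ρstar →
      ∀ x : ℕ, 1 ≤ x → x ≤ n → F x = F' x) := by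
  have hb : IsConvexBasis n b := ⟨hb0, hbpos, hbconv⟩
  refine ⟨fun x hx hxn => ?_, fun _ F' hF' x hx hxn => ?_⟩
  · rw [hfeas.eq_upperF hb hopt hx hxn.le, hfeas.eq_upperF hb hopt x.succ_pos hxn]
    exact monotoneOn_upperF hb (hfeas.le_one hb (by omega)) (fun _ => hfeas.lowerF_le_upperF)
      (by simp; omega) (by simpa using hxn) x.le_succ
  · rw [hfeas.eq_upperF hb hopt hx hxn, hF'.eq_upperF hb hopt hx hxn]

/-- For a positive, convex, nondecreasing basis function `b`
(with `b(0) = 0`), every optimal solution `(F, ρ*)` of the linear program has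
`F` nondecreasing on `{1,…,n}`; moreover, if the optimal value satisfies
`ρ* < 1`, then the optimal function is unique: any two optimal solutions agree
on `{1,…,n}`. -/
theorem optimal_F_nondecreasing_and_unique
    (n : ℕ) (hn : 0 < n) (b : ℕ → ℝ)
    (hb0 : b 0 = 0)
    (hbpos : ∀ x : ℕ, 1 ≤ x → x ≤ n → 0 < b x)
    (hbmono : ∀ x : ℕ, 1 ≤ x → x < n → b x ≤ b (x + 1))
    (hbconv : ∀ x : ℕ, 1 ≤ x → x + 1 ≤ n → b x - b (x - 1) ≤ b (x + 1) - b x)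
    (F : ℕ → ℝ) (ρstar : ℝ)
    (hfeas : FeasPoA n b F ρstar)
    (hopt : ∀ F' : ℕ → ℝ, ∀ ρ' : ℝ, FeasPoA n b F' ρ' → ρ' ≤ ρstar) :
    (∀ x : ℕ, 1 ≤ x → x < n → F x ≤ F (x + 1)) ∧
    (ρstar < 1 → ∀ F' : ℕ → ℝ, FeasPoA n b F' ρstar →
      ∀ x : ℕ, 1 ≤ x → x ≤ n → F x = F' x) :=
  optimal_F_nondecreasing_and_unique_general n b hb0 hbpos hbconv F ρstar hfeas hopt
end
end
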